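/- Suppose 0 < a₁₁ < min(1, −a₁₂a₂₁), γ₁ < a₁₁γ₂, and (γ₁ − a₁₁γ₂)² − 4γ₁γ₂(−a₁₁ − a₁₂a₂₁) < 0, with γ₁, γ₂ > 0. Then for every k ∈ ℝ, h(k²) := γ₁γ₂k⁴ + (γ₁ − a₁₁γ₂)k² + (−a₁₁ − a₁₂a₂₁) > 0 and T_k := (a₁₁ − 1) − k²(γ₁ + γ₂) < 0. -/
import Mathlib

theorem stmt_2 (a11 a12 a21 γ1 γ2 : ℝ) (hγ1 : 0 < γ1) (hγ2 : 0 < γ2)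
    (h1 : 0 < a11) (h2 : a11 < min 1 (-a12 * a21))
    (h3 : γ1 < a11 * γ2)
    (h4 : (γ1 - a11 * γ2) ^ 2 - 4 * γ1 * γ2 * (-a11 - a12 * a21) < 0) :
    ∀ k : ℝ, γ1 * γ2 * k ^ 4 + (γ1 - a11 * γ2) * k ^ 2 + (-a11 - a12 * a21) > 0 ∧
      (a11 - 1) - k ^ 2 * (γ1 + γ2) < 0 := by
  intro k
  have ha : a11 < 1 := lt_of_lt_of_le h2 (min_le_left _ _)
  constructor
  · nlinarith [sq_nonneg (2 * (γ1 * γ2) * k ^ 2 + (γ1 - a11 * γ2)), mul_pos hγ1 hγ2, sq_nonneg k]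
  · nlinarith [sq_nonneg k, mul_pos hγ1 hγ2]
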